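/- arXiv:2302.02561 — 2 statements merged into one kernel-verified Lean document; each statement's English description precedes it below -/
import Mathlib

section
/- (Information decomposition of the adversarial loss, Lemma 4.2, second part.) Let K, X, B, Z be nonempty finite types, let p be a pmf on K × X with K-marginal p_K, let f : K → B be a function, and let q be a kernel from X to Z. Define the pmf s on K × X × B × Z by s(k,x,β,z) = p(k,x)·q(z|x) if β = f(k) and 0 otherwise, and let s_{KZ} denote its (K,Z)-marginal. Then the supremum, over all kernels D from Z to K with D(k|z) > 0 whenever s_{KZ}(k,z) > 0, of ∑_{k,z} s_{KZ}(k,z) log D(k|z) is at least −H(p_K), and it equals −H(p_K) if and only if I_s(Z;B) = 0 and I_s(Z;K|B) = 0. -/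
/-- Mutual information `I_s(Z;B)` between the encoding `Z` and the domain index `B`,
computed from the corresponding marginals of a joint `s` on `K × X × B × Z`. -/
noncomputable def IZB {K X B Z : Type*} [Fintype K] [Fintype X] [Fintype B] [Fintype Z]
    (s : K → X → B → Z → ℝ) : ℝ :=
  ∑ β, ∑ z, (∑ k, ∑ x, s k x β z) *
    Real.log ((∑ k, ∑ x, s k x β z) /
      ((∑ k, ∑ x, ∑ z', s k x β z') * (∑ k, ∑ x, ∑ β', s k x β' z)))

/-- Conditional mutual information `I_s(Z;K|B)`, computed from the corresponding
marginals of a joint `s` on `K × X × B × Z`. -/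
noncomputable def IZKgB {K X B Z : Type*} [Fintype K] [Fintype X] [Fintype B] [Fintype Z]
    (s : K → X → B → Z → ℝ) : ℝ :=
  ∑ k, ∑ β, ∑ z, (∑ x, s k x β z) *
    Real.log (((∑ x, s k x β z) * (∑ k', ∑ x, ∑ z', s k' x β z')) /
      ((∑ k', ∑ x, s k' x β z) * (∑ x, ∑ z', s k x β z')))


/-!
The supremum is attained at the posterior `D(k|z) = s(k,z) / s_Z(z)` (Gibbs' inequality), where
it equals `-H(K|Z) = -H(K) + I(K;Z)`. Since `B = f(K)`, the chain rule gives
`I(K;Z) = I(Z;B) + I(Z;K|B)`, and both terms are nonnegative, again by Gibbs' inequality. The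
information identities all follow by expanding each quantity into sums of `x log x` over marginals.
-/

open Finset Real

lemma mul_log_div_eq_sub {x a b : ℝ} (h : x ≠ 0 → a ≠ 0 ∧ b ≠ 0) :
    x * log (a / b) = x * log a - x * log b := by
  rcases eq_or_ne x 0 with rfl | hx
  · simp
  · obtain ⟨ha, hb⟩ := h hx
    rw [log_div ha hb, mul_sub]

lemma mul_log_mul_eq_add {x a b : ℝ} (h : x ≠ 0 → a ≠ 0 ∧ b ≠ 0) :
    x * log (a * b) = x * log a + x * log b := by
  rcases eq_or_ne x 0 with rfl | hx
  · simp
  · obtain ⟨ha, hb⟩ := h hx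
    rw [log_mul ha hb, mul_add]

lemma sum_ne_zero_of_nonneg {ι : Type*} [Fintype ι] {g : ι → ℝ} (hg : ∀ i, 0 ≤ g i) {i : ι}
    (hi : g i ≠ 0) : ∑ j, g j ≠ 0 :=
  fun h ↦ hi ((sum_eq_zero_iff_of_nonneg fun j _ ↦ hg j).1 h i (mem_univ i))

lemma sub_le_mul_log_div {u v : ℝ} (hu : 0 ≤ u) (hv : 0 ≤ v) (huv : u ≠ 0 → v ≠ 0) :
    u - v ≤ u * log (u / v) := by
  rcases hu.eq_or_lt with rfl | hu
  · simpa using hv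
  have hv : 0 < v := hv.lt_of_ne' (huv hu.ne')
  calc u - v = -(u * (v / u - 1)) := by field_simp; ring
    _ ≤ -(u * log (v / u)) := by gcongr; exact log_le_sub_one_of_pos (by positivity)
    _ = u * log (u / v) := by rw [← inv_div, log_inv, mul_neg, neg_neg]

lemma sum_mul_log_div_nonneg {ι : Type*} [Fintype ι] {u v : ι → ℝ} (hu : ∀ i, 0 ≤ u i)
    (hv : ∀ i, 0 ≤ v i) (huv : ∀ i, u i ≠ 0 → v i ≠ 0) (hsum : ∑ i, v i ≤ ∑ i, u i) :
    0 ≤ ∑ i, u i * log (u i / v i) :=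
  calc 0 ≤ ∑ i, (u i - v i) := by rw [sum_sub_distrib]; linarith
    _ ≤ _ := sum_le_sum fun i _ ↦ sub_le_mul_log_div (hu i) (hv i) (huv i)

section Information

variable {α β γ : Type*}

section Fintype

variable [Fintype α] [Fintype β] [Fintype γ]

noncomputable def mutualInfo (r : α → γ → ℝ) : ℝ :=
  ∑ a, ∑ c, r a c * log (r a c / ((∑ c', r a c') * ∑ a', r a' c))

/-- `I(A;C|B)` for the joint law `t a b c` of `(A, B, C)`. -/
noncomputable def condMutualInfo (t : α → β → γ → ℝ) : ℝ :=
  ∑ a, ∑ b, ∑ c, t a b c *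
    log (t a b c * (∑ a', ∑ c', t a' b c') / ((∑ a', t a' b c) * ∑ c', t a b c'))

lemma mutualInfo_eq_sum_mul_log {r : α → γ → ℝ} (hr : ∀ a c, 0 ≤ r a c) :
    mutualInfo r = ∑ a, ∑ c, r a c * log (r a c)
      - ∑ a, (∑ c, r a c) * log (∑ c, r a c) - ∑ c, (∑ a, r a c) * log (∑ a, r a c) := by
  have hterm : ∀ a c, r a c * log (r a c / ((∑ c', r a c') * ∑ a', r a' c)) =
      r a c * log (r a c) - r a c * log (∑ c', r a c') - r a c * log (∑ a', r a' c) := by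
    intro a c
    have hA : r a c ≠ 0 → ∑ c', r a c' ≠ 0 := sum_ne_zero_of_nonneg (hr a)
    have hC : r a c ≠ 0 → ∑ a', r a' c ≠ 0 := sum_ne_zero_of_nonneg (hr · c)
    rw [mul_log_div_eq_sub fun h ↦ ⟨h, mul_ne_zero (hA h) (hC h)⟩,
      mul_log_mul_eq_add fun h ↦ ⟨hA h, hC h⟩]
    ring
  simp only [mutualInfo, hterm, sum_sub_distrib, ← sum_mul]
  rw [sum_comm (f := fun a c ↦ r a c * log (∑ a', r a' c))]
  simp only [← sum_mul]

lemma condMutualInfo_eq_sum_mul_log {t : α → β → γ → ℝ} (ht : ∀ a b c, 0 ≤ t a b c) :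
    condMutualInfo t = ∑ a, ∑ b, ∑ c, t a b c * log (t a b c)
      + ∑ b, (∑ a, ∑ c, t a b c) * log (∑ a, ∑ c, t a b c)
      - ∑ a, ∑ b, (∑ c, t a b c) * log (∑ c, t a b c)
      - ∑ b, ∑ c, (∑ a, t a b c) * log (∑ a, t a b c) := by
  have hterm : ∀ a b c, t a b c * log (t a b c * (∑ a', ∑ c', t a' b c') /
        ((∑ a', t a' b c) * ∑ c', t a b c')) =
      t a b c * log (t a b c) + t a b c * log (∑ a', ∑ c', t a' b c')
        - t a b c * log (∑ a', t a' b c) - t a b c * log (∑ c', t a b c') := by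
    intro a b c
    have hAB : t a b c ≠ 0 → ∑ c', t a b c' ≠ 0 := sum_ne_zero_of_nonneg (ht a b)
    have hBC : t a b c ≠ 0 → ∑ a', t a' b c ≠ 0 := sum_ne_zero_of_nonneg (ht · b c)
    have hB : t a b c ≠ 0 → ∑ a', ∑ c', t a' b c' ≠ 0 := fun h ↦
      sum_ne_zero_of_nonneg (fun a' ↦ sum_nonneg fun c' _ ↦ ht a' b c') (hAB h)
    rw [mul_log_div_eq_sub fun h ↦ ⟨mul_ne_zero h (hB h), mul_ne_zero (hBC h) (hAB h)⟩,
      mul_log_mul_eq_add fun h ↦ ⟨h, hB h⟩, mul_log_mul_eq_add fun h ↦ ⟨hBC h, hAB h⟩]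
    ring
  simp only [condMutualInfo, hterm, sum_add_distrib, sum_sub_distrib, ← sum_mul]
  rw [sum_comm (f := fun a b ↦ (∑ c, t a b c) * log (∑ a', ∑ c', t a' b c')),
    sum_comm (f := fun a b ↦ ∑ c, t a b c * log (∑ a', t a' b c))]
  simp only [← sum_mul]
  simp_rw [sum_comm (s := (univ : Finset α)) (t := (univ : Finset γ)), ← sum_mul]
  ring

lemma mutualInfo_nonneg {r : α → γ → ℝ} (hr : ∀ a c, 0 ≤ r a c) (hr1 : ∑ a, ∑ c, r a c = 1) :
    0 ≤ mutualInfo r := by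
  have hrC : ∑ c, ∑ a, r a c = 1 := by rw [sum_comm, hr1]
  have := sum_mul_log_div_nonneg (ι := α × γ) (u := fun i ↦ r i.1 i.2)
    (v := fun i ↦ (∑ c', r i.1 c') * ∑ a', r a' i.2) (fun i ↦ hr i.1 i.2)
    (fun i ↦ mul_nonneg (sum_nonneg fun _ _ ↦ hr _ _) (sum_nonneg fun _ _ ↦ hr _ _))
    (fun i h ↦ mul_ne_zero (sum_ne_zero_of_nonneg (hr i.1) h)
      (sum_ne_zero_of_nonneg (hr · i.2) h))
    (by simp only [Fintype.sum_prod_type, ← mul_sum, hrC, hr1, le_refl, mul_one])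
  simpa only [mutualInfo, Fintype.sum_prod_type] using this

lemma condMutualInfo_nonneg {t : α → β → γ → ℝ} (ht : ∀ a b c, 0 ≤ t a b c) :
    0 ≤ condMutualInfo t := by
  have hAB : ∀ a b c, t a b c ≠ 0 → ∑ c', t a b c' ≠ 0 := fun a b _ ↦
    sum_ne_zero_of_nonneg (ht a b)
  have hBC : ∀ a b c, t a b c ≠ 0 → ∑ a', t a' b c ≠ 0 := fun _ b c ↦
    sum_ne_zero_of_nonneg (ht · b c)
  have hB : ∀ b, 0 ≤ ∑ a', ∑ c', t a' b c' := fun b ↦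
    sum_nonneg fun a' _ ↦ sum_nonneg fun c' _ ↦ ht a' b c'
  -- Gibbs against `t_{BC} t_{AB} / t_B`, whose `B = b` slice has total mass `t_B(b)`.
  have hslice : ∀ b, ∑ a, ∑ c, (∑ a', t a' b c) * (∑ c', t a b c') / ∑ a', ∑ c', t a' b c' =
      ∑ a, ∑ c, t a b c := by
    intro b
    simp only [div_eq_mul_inv, ← sum_mul, ← mul_sum]
    rw [sum_comm (f := fun c a ↦ t a b c), mul_self_mul_inv]
  have := sum_mul_log_div_nonneg (ι := α × β × γ) (u := fun i ↦ t i.1 i.2.1 i.2.2)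
    (v := fun i ↦ (∑ a', t a' i.2.1 i.2.2) * (∑ c', t i.1 i.2.1 c') / ∑ a', ∑ c', t a' i.2.1 c')
    (fun i ↦ ht _ _ _)
    (fun i ↦ div_nonneg
      (mul_nonneg (sum_nonneg fun _ _ ↦ ht _ _ _) (sum_nonneg fun _ _ ↦ ht _ _ _)) (hB _))
    (fun i h ↦ div_ne_zero (mul_ne_zero (hBC _ _ _ h) (hAB _ _ _ h))
      (sum_ne_zero_of_nonneg (fun a' ↦ sum_nonneg fun c' _ ↦ ht a' _ c') (hAB _ _ _ h)))
    (by
      simp only [Fintype.sum_prod_type]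
      rw [sum_comm, sum_comm (f := fun a b ↦ ∑ c, t a b c)]
      simp only [hslice, le_refl])
  simpa only [condMutualInfo, Fintype.sum_prod_type, div_div_eq_mul_div] using this

/-- The maximiser is the posterior `D c a = r a c / r_C c` (any distribution where `r_C c = 0`). -/
lemma isGreatest_sum_mul_log_kernel [Nonempty α] {r : α → γ → ℝ} (hr : ∀ a c, 0 ≤ r a c) :
    IsGreatest {v : ℝ | ∃ D : γ → α → ℝ, (∀ c a, 0 ≤ D c a) ∧ (∀ c, ∑ a, D c a = 1) ∧
        (∀ a c, 0 < r a c → 0 < D c a) ∧ v = ∑ a, ∑ c, r a c * log (D c a)}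
      (∑ a, ∑ c, r a c * log (r a c) - ∑ c, (∑ a, r a c) * log (∑ a, r a c)) := by
  have hC : ∀ a c, r a c ≠ 0 → ∑ a', r a' c ≠ 0 := fun _ c ↦ sum_ne_zero_of_nonneg (hr · c)
  have hmarg : ∑ a, ∑ c, r a c * log (∑ a', r a' c) = ∑ c, (∑ a, r a c) * log (∑ a, r a c) := by
    rw [sum_comm]; simp only [sum_mul]
  refine ⟨⟨fun c a ↦ if ∑ a', r a' c = 0 then (Fintype.card α : ℝ)⁻¹ else r a c / ∑ a', r a' c,
    fun c a ↦ ?_, fun c ↦ ?_, fun a c hac ↦ ?_, ?_⟩, ?_⟩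
  · dsimp only
    split_ifs
    exacts [by positivity, div_nonneg (hr a c) (sum_nonneg fun a' _ ↦ hr a' c)]
  · dsimp only
    split_ifs with h
    · simp
    · rw [← sum_div, div_self h]
  · dsimp only
    rw [if_neg (hC a c hac.ne')]
    exact div_pos hac (hac.trans_le (single_le_sum (fun a' _ ↦ hr a' c) (mem_univ a)))
  · rw [← hmarg, ← sum_sub_distrib]
    refine sum_congr rfl fun a _ ↦ ?_
    rw [← sum_sub_distrib]
    refine sum_congr rfl fun c _ ↦ ?_
    rcases eq_or_ne (r a c) 0 with h | h
    · simp [h]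
    · dsimp only
      rw [if_neg (hC a c h), mul_log_div_eq_sub fun h' ↦ ⟨h', hC a c h'⟩]
  · rintro v ⟨D, hD0, hD1, hDpos, rfl⟩
    have hD : ∀ a c, r a c ≠ 0 → D c a ≠ 0 := fun a c h ↦
      (hDpos a c ((hr a c).lt_of_ne' h)).ne'
    have hgibbs := sum_mul_log_div_nonneg (ι := α × γ) (u := fun i ↦ r i.1 i.2)
      (v := fun i ↦ D i.2 i.1 * ∑ a', r a' i.2) (fun i ↦ hr _ _)
      (fun i ↦ mul_nonneg (hD0 _ _) (sum_nonneg fun _ _ ↦ hr _ _))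
      (fun i h ↦ mul_ne_zero (hD _ _ h) (hC _ _ h))
      (by
        simp only [Fintype.sum_prod_type]
        rw [sum_comm]
        simp only [← sum_mul, hD1, one_mul]
        rw [sum_comm])
    have hterm : ∀ a c, r a c * log (r a c / (D c a * ∑ a', r a' c)) =
        r a c * log (r a c) - r a c * log (D c a) - r a c * log (∑ a', r a' c) := by
      intro a c
      rw [mul_log_div_eq_sub fun h ↦ ⟨h, mul_ne_zero (hD a c h) (hC a c h)⟩,
        mul_log_mul_eq_add fun h ↦ ⟨hD a c h, hC a c h⟩]
      ring
    simp only [Fintype.sum_prod_type, hterm, sum_sub_distrib, hmarg] at hgibbs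
    linarith

end Fintype

section Graph

variable [DecidableEq β]

/-- The joint law of `(A, f A, C)`, given the joint law `r` of `(A, C)`. -/
def graphJoint (f : α → β) (r : α → γ → ℝ) (a : α) (b : β) (c : γ) : ℝ :=
  if b = f a then r a c else 0

lemma graphJoint_nonneg (f : α → β) {r : α → γ → ℝ} (hr : ∀ a c, 0 ≤ r a c) (a : α) (b : β)
    (c : γ) : 0 ≤ graphJoint f r a b c := by
  unfold graphJoint
  split_ifs
  exacts [hr a c, le_rfl]

lemma sum_sum_graphJoint [Fintype α] [Fintype β] (f : α → β) (r : α → γ → ℝ) (c : γ) :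
    ∑ b, ∑ a, graphJoint f r a b c = ∑ a, r a c := by
  rw [sum_comm]
  simp [graphJoint]

variable [Fintype α] [Fintype β] [Fintype γ]

lemma mutualInfo_eq_add_condMutualInfo (f : α → β) {r : α → γ → ℝ} (hr : ∀ a c, 0 ≤ r a c) :
    mutualInfo r =
      mutualInfo (fun b c ↦ ∑ a, graphJoint f r a b c) + condMutualInfo (graphJoint f r) := by
  have ht := graphJoint_nonneg f hr
  rw [mutualInfo_eq_sum_mul_log hr,
    mutualInfo_eq_sum_mul_log fun b c ↦ sum_nonneg fun a _ ↦ ht a b c,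
    condMutualInfo_eq_sum_mul_log ht]
  have hABC : ∑ a, ∑ b, ∑ c, graphJoint f r a b c * log (graphJoint f r a b c) =
      ∑ a, ∑ c, r a c * log (r a c) := by
    simp [graphJoint, apply_ite, ite_mul]
  have hAB : ∑ a, ∑ b, (∑ c, graphJoint f r a b c) * log (∑ c, graphJoint f r a b c) =
      ∑ a, (∑ c, r a c) * log (∑ c, r a c) := by
    simp [graphJoint, apply_ite, ite_mul]
  have hB : ∀ b, ∑ c, ∑ a, graphJoint f r a b c = ∑ a, ∑ c, graphJoint f r a b c :=
    fun b ↦ sum_comm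
  rw [hABC, hAB]
  simp only [hB, sum_sum_graphJoint]
  ring

end Graph

end Information

section Marginals

variable {K X B Z : Type*} [Fintype K] [Fintype X] [Fintype B] [Fintype Z]

lemma IZB_eq_mutualInfo (s : K → X → B → Z → ℝ) :
    IZB s = mutualInfo (fun β z ↦ ∑ k, ∑ x, s k x β z) := by
  unfold IZB mutualInfo
  simp only [sum_comm (s := (univ : Finset X)) (t := (univ : Finset Z)),
    sum_comm (s := (univ : Finset K)) (t := (univ : Finset Z)),
    sum_comm (s := (univ : Finset X)) (t := (univ : Finset B)),
    sum_comm (s := (univ : Finset K)) (t := (univ : Finset B))]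

lemma IZKgB_eq_condMutualInfo (s : K → X → B → Z → ℝ) :
    IZKgB s = condMutualInfo (fun k β z ↦ ∑ x, s k x β z) := by
  unfold IZKgB condMutualInfo
  simp only [sum_comm (s := (univ : Finset X)) (t := (univ : Finset Z))]

end Marginals

theorem adversarial_loss_global_minimum_general {K X B Z : Type*}
    [Fintype K] [Fintype X] [Fintype B] [Fintype Z] [DecidableEq B]
    [Nonempty K]
    (p : K → X → ℝ) (hp0 : ∀ k x, 0 ≤ p k x) (hp1 : ∑ k, ∑ x, p k x = 1)
    (pK : K → ℝ) (hpK : ∀ k, pK k = ∑ x, p k x)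
    (f : K → B)
    (q : X → Z → ℝ) (hq0 : ∀ x z, 0 ≤ q x z) (hq1 : ∀ x, ∑ z, q x z = 1)
    (s : K → X → B → Z → ℝ)
    (hs : ∀ k x β z, s k x β z = if β = f k then p k x * q x z else 0)
    (sKZ : K → Z → ℝ) (hsKZ : ∀ k z, sKZ k z = ∑ x, ∑ β, s k x β z) :
    -(-∑ k, pK k * Real.log (pK k))
      ≤ sSup {v : ℝ | ∃ D : Z → K → ℝ, (∀ z k, 0 ≤ D z k) ∧ (∀ z, ∑ k, D z k = 1) ∧
          (∀ k z, 0 < sKZ k z → 0 < D z k) ∧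
          v = ∑ k, ∑ z, sKZ k z * Real.log (D z k)}
    ∧ (sSup {v : ℝ | ∃ D : Z → K → ℝ, (∀ z k, 0 ≤ D z k) ∧ (∀ z, ∑ k, D z k = 1) ∧
          (∀ k z, 0 < sKZ k z → 0 < D z k) ∧
          v = ∑ k, ∑ z, sKZ k z * Real.log (D z k)}
        = -(-∑ k, pK k * Real.log (pK k))
      ↔ IZB s = 0 ∧ IZKgB s = 0) := by
  have hr : ∀ k z, sKZ k z = ∑ x, p k x * q x z := fun k z ↦ by simp [hsKZ, hs]
  have hr0 : ∀ k z, 0 ≤ sKZ k z := fun k z ↦ by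
    rw [hr]; exact sum_nonneg fun x _ ↦ mul_nonneg (hp0 k x) (hq0 x z)
  have hrK : ∀ k, ∑ z, sKZ k z = pK k := fun k ↦ by
    simp only [hr, hpK]; rw [sum_comm]; simp only [← mul_sum, hq1, mul_one]
  have hr1 : ∑ k, ∑ z, sKZ k z = 1 := by simp only [hrK, hpK, hp1]
  have hsx : ∀ k β z, ∑ x, s k x β z = graphJoint f sKZ k β z := fun k β z ↦ by
    simp only [hs, graphJoint, hr]; split_ifs <;> simp
  have hIZB : IZB s = mutualInfo (fun β z ↦ ∑ k, graphJoint f sKZ k β z) := by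
    simp only [IZB_eq_mutualInfo, hsx]
  have hIZKgB : IZKgB s = condMutualInfo (graphJoint f sKZ) := by
    simp only [IZKgB_eq_condMutualInfo, hsx]
  have hIZB0 : 0 ≤ IZB s := hIZB ▸ mutualInfo_nonneg
    (fun β z ↦ sum_nonneg fun k _ ↦ graphJoint_nonneg f hr0 k β z)
    (by rw [sum_comm]; simp only [sum_sum_graphJoint]; rw [sum_comm, hr1])
  have hIZKgB0 : 0 ≤ IZKgB s := hIZKgB ▸ condMutualInfo_nonneg (graphJoint_nonneg f hr0)
  have hchain : mutualInfo sKZ = IZB s + IZKgB s := by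
    rw [hIZB, hIZKgB]; exact mutualInfo_eq_add_condMutualInfo f hr0
  have hMI := mutualInfo_eq_sum_mul_log hr0
  simp only [hrK] at hMI
  rw [(isGreatest_sum_mul_log_kernel hr0).csSup_eq]
  exact ⟨by linarith, fun _ ↦ ⟨by linarith, by linarith⟩, fun ⟨_, _⟩ ↦ by linarith⟩

/-- **Information decomposition of the adversarial loss (Lemma 4.2, second part).**
The supremum of the discriminator log-likelihood is at least `-H(p_K)`, with
equality iff `I_s(Z;B) = 0` and `I_s(Z;K|B) = 0`. -/
theorem adversarial_loss_global_minimum {K X B Z : Type*}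
    [Fintype K] [Fintype X] [Fintype B] [Fintype Z] [DecidableEq B]
    [Nonempty K] [Nonempty X] [Nonempty B] [Nonempty Z]
    (p : K → X → ℝ) (hp0 : ∀ k x, 0 ≤ p k x) (hp1 : ∑ k, ∑ x, p k x = 1)
    (pK : K → ℝ) (hpK : ∀ k, pK k = ∑ x, p k x)
    (f : K → B)
    (q : X → Z → ℝ) (hq0 : ∀ x z, 0 ≤ q x z) (hq1 : ∀ x, ∑ z, q x z = 1)
    (s : K → X → B → Z → ℝ)
    (hs : ∀ k x β z, s k x β z = if β = f k then p k x * q x z else 0)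
    (sKZ : K → Z → ℝ) (hsKZ : ∀ k z, sKZ k z = ∑ x, ∑ β, s k x β z) :
    -(-∑ k, pK k * Real.log (pK k))
      ≤ sSup {v : ℝ | ∃ D : Z → K → ℝ, (∀ z k, 0 ≤ D z k) ∧ (∀ z, ∑ k, D z k = 1) ∧
          (∀ k z, 0 < sKZ k z → 0 < D z k) ∧
          v = ∑ k, ∑ z, sKZ k z * Real.log (D z k)}
    ∧ (sSup {v : ℝ | ∃ D : Z → K → ℝ, (∀ z k, 0 ≤ D z k) ∧ (∀ z, ∑ k, D z k = 1) ∧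
          (∀ k z, 0 < sKZ k z → 0 < D z k) ∧
          v = ∑ k, ∑ z, sKZ k z * Real.log (D z k)}
        = -(-∑ k, pK k * Real.log (pK k))
      ↔ IZB s = 0 ∧ IZKgB s = 0) :=
  adversarial_loss_global_minimum_general p hp0 hp1 pK hpK f q hq0 hq1 s hs sKZ hsKZ
end

section
/- (Domain indices maximize data and label orthogonal information, Appendix Lemma.) Let X, Y, U, B, Z be nonempty finite types with an injection ι : X → Z, and let p be a pmf on X × Y with marginal p_X. For a kernel κ from X to U × B × Z, define the pmf π_κ on X × Y × U × B × Z by π_κ(x,y,u,β,z) = p(x,y)·κ(u,β,z|x), with mutual informations computed from the corresponding marginals of π_κ. Then the supremum, over all kernels κ from X to U × B × Z satisfying the independence constraint I_{π_κ}(B;Z) = 0, of I_{π_κ}(X;(U,B,Z)) + I_{π_κ}(Y;Z) equals H(p_X) + I_p(X;Y), and this supremum is attained; consequently, any constrained maximizer κ satisfies both I_{π_κ}(X;(U,B,Z)) = H(p_X) and I_{π_κ}(Y;Z) = I_p(X;Y). -/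
/-- Mutual information of a joint `r` on `A × C`, with marginals computed as sums:
`I_r(A;C) = ∑ a c, r a c * log (r a c / (r_A a * r_C c))`. -/
noncomputable def MI2 {A C : Type*} [Fintype A] [Fintype C] (r : A → C → ℝ) : ℝ :=
  ∑ a, ∑ c, r a c * Real.log (r a c / ((∑ c', r a c') * (∑ a', r a' c)))

/-- The joint pmf `π_κ x y u β z = p x y * κ u β z|x` induced by a pmf `p` on
`X × Y` and a kernel `κ` from `X` to `U × B × Z`. -/
noncomputable def piDist {X Y U B Z : Type*}
    (p : X → Y → ℝ) (κ : X → U → B → Z → ℝ) : X → Y → U → B → Z → ℝ :=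
  fun x y u β z => p x y * κ x u β z

/-- `(B,Z)`-marginal of a joint on `X × Y × U × B × Z`. -/
noncomputable def margBZ {X Y U B Z : Type*} [Fintype X] [Fintype Y] [Fintype U]
    (π : X → Y → U → B → Z → ℝ) : B → Z → ℝ :=
  fun β z => ∑ x, ∑ y, ∑ u, π x y u β z

/-- `(X,(U,B,Z))`-marginal of a joint on `X × Y × U × B × Z`. -/
noncomputable def margXUBZ {X Y U B Z : Type*} [Fintype Y]
    (π : X → Y → U → B → Z → ℝ) : X → (U × B × Z) → ℝ :=
  fun x w => ∑ y, π x y w.1 w.2.1 w.2.2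

/-- `(Y,Z)`-marginal of a joint on `X × Y × U × B × Z`. -/
noncomputable def margYZ {X Y U B Z : Type*} [Fintype X] [Fintype U] [Fintype B]
    (π : X → Y → U → B → Z → ℝ) : Y → Z → ℝ :=
  fun y z => ∑ x, ∑ u, ∑ β, π x y u β z

/-!
The upper bound splits into two information inequalities, valid for every kernel `κ`:
`I(X; (U,B,Z)) ≤ H(X)`, and the data-processing inequality `I(Y; Z) ≤ I(X; Y)` for the Markov
chain `Y — X — Z`. Both follow from the log-sum inequality, the first because `H(X) = I(X; X)`
and `(U,B,Z)` is obtained from `X` by a kernel. The bound is attained by the deterministic kernel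
`x ↦ (u₀, β₀, ι x)`: since `ι` is injective, `(U,B,Z)` then determines `X`, `Z` is an injective
relabelling of `X`, and `B` is constant, hence independent of `Z`.
-/

open Finset Real

/-- The log-sum inequality: Jensen for `x ↦ x log x` at the points `a i / b i` with weights
`b i / ∑ b`. -/
theorem sum_mul_log_sum_div_sum_le {ι : Type*} (s : Finset ι) {a b : ι → ℝ}
    (ha : ∀ i ∈ s, 0 ≤ a i) (hb : ∀ i ∈ s, 0 ≤ b i) (hab : ∀ i ∈ s, b i = 0 → a i = 0) :
    (∑ i ∈ s, a i) * log ((∑ i ∈ s, a i) / ∑ i ∈ s, b i) ≤ ∑ i ∈ s, a i * log (a i / b i) := by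
  set B := ∑ i ∈ s, b i
  rcases (sum_nonneg hb).eq_or_lt with hB | hB
  · have ha0 : ∀ i ∈ s, a i = 0 := fun i hi =>
      hab i hi ((sum_eq_zero_iff_of_nonneg hb).mp hB.symm i hi)
    rw [sum_eq_zero ha0, sum_eq_zero fun i hi => by rw [ha0 i hi, zero_mul], zero_mul]
  have hweight : ∀ i ∈ s, b i / B * (a i / b i) = a i / B := fun i hi => by
    rcases eq_or_ne (b i) 0 with hbi | hbi
    · simp [hbi, hab i hi hbi]
    · field_simp
  have jensen := convexOn_mul_log.map_sum_le (t := s) (w := fun i => b i / B)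
    (p := fun i => a i / b i) (fun i hi => div_nonneg (hb i hi) hB.le)
    (by rw [← sum_div, div_self hB.ne']) (fun i hi => div_nonneg (ha i hi) (hb i hi))
  simp only [smul_eq_mul] at jensen
  rw [sum_congr rfl hweight, ← sum_div] at jensen
  calc (∑ i ∈ s, a i) * log ((∑ i ∈ s, a i) / B)
      = B * ((∑ i ∈ s, a i) / B * log ((∑ i ∈ s, a i) / B)) := by
        rw [← mul_assoc, mul_div_cancel₀ _ hB.ne']
    _ ≤ B * ∑ i ∈ s, b i / B * (a i / b i * log (a i / b i)) :=
      mul_le_mul_of_nonneg_left jensen hB.le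
    _ = ∑ i ∈ s, a i * log (a i / b i) := by
      rw [mul_sum]
      refine sum_congr rfl fun i hi => ?_
      rw [← mul_assoc (b i / B), hweight i hi, ← mul_assoc, mul_div_cancel₀ _ hB.ne']

section MutualInformation

variable {A C X Y Z : Type*} [Fintype A] [Fintype C] [Fintype X] [Fintype Y] [Fintype Z]

theorem MI2_comp_le (p : X → Y → ℝ) (κ : X → Z → ℝ) (hp : ∀ x y, 0 ≤ p x y)
    (hκ : ∀ x z, 0 ≤ κ x z) (hκ1 : ∀ x, ∑ z, κ x z = 1) :
    MI2 (fun y z => ∑ x, p x y * κ x z) ≤ MI2 p := by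
  set pX := fun x => ∑ y, p x y
  set pY := fun y => ∑ x, p x y
  have le_pX : ∀ x y, p x y ≤ pX x := fun x y => single_le_sum (fun y _ => hp x y) (mem_univ y)
  have le_pY : ∀ x y, p x y ≤ pY y := fun x y => single_le_sum (fun x _ => hp x y) (mem_univ x)
  have row : ∀ y, ∑ z, ∑ x, p x y * κ x z = pY y := fun y => by
    rw [sum_comm]; simp only [← mul_sum, hκ1, mul_one, pY]
  have col : ∀ z, ∑ y, ∑ x, p x y * κ x z = ∑ x, pX x * κ x z := fun z => by
    rw [sum_comm]; simp only [← sum_mul, pX]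
  have pointwise : ∀ y z, (∑ x, p x y * κ x z) *
      log ((∑ x, p x y * κ x z) / (pY y * ∑ x, pX x * κ x z))
      ≤ ∑ x, p x y * κ x z * log (p x y / (pX x * pY y)) := fun y z => by
    calc _ = (∑ x, p x y * κ x z) *
          log ((∑ x, p x y * κ x z) / ∑ x, pY y * (pX x * κ x z)) := by rw [mul_sum]
      _ ≤ ∑ x, p x y * κ x z * log (p x y * κ x z / (pY y * (pX x * κ x z))) := by
        refine sum_mul_log_sum_div_sum_le _ (fun x _ => mul_nonneg (hp x y) (hκ x z))
          (fun x _ => mul_nonneg ((hp x y).trans (le_pY x y))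
            (mul_nonneg ((hp x y).trans (le_pX x y)) (hκ x z))) fun x _ h0 => ?_
        rcases mul_eq_zero.mp h0 with h | h
        · rw [le_antisymm (h ▸ le_pY x y) (hp x y), zero_mul]
        rcases mul_eq_zero.mp h with h | h
        · rw [le_antisymm (h ▸ le_pX x y) (hp x y), zero_mul]
        · rw [h, mul_zero]
      _ = _ := sum_congr rfl fun x _ => by
        rcases eq_or_ne (κ x z) 0 with h | h
        · simp [h]
        · rw [← mul_assoc, mul_div_mul_right _ _ h, mul_comm (pY y)]
  unfold MI2
  simp only [row, col]
  calc _ ≤ ∑ y, ∑ z, ∑ x, p x y * κ x z * log (p x y / (pX x * pY y)) :=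
        sum_le_sum fun y _ => sum_le_sum fun z _ => pointwise y z
    _ = ∑ x, ∑ y, ∑ z, p x y * κ x z * log (p x y / (pX x * pY y)) :=
        (sum_congr rfl fun y _ => sum_comm).trans sum_comm
    _ = _ := sum_congr rfl fun x _ => sum_congr rfl fun y _ => by
        simp only [← sum_mul, ← mul_sum, hκ1, mul_one, pX, pY]

theorem MI2_diag [DecidableEq A] (q : A → ℝ) :
    MI2 (fun a a' => if a = a' then q a else 0) = -∑ a, q a * log (q a) := by
  unfold MI2
  rw [← sum_neg_distrib]
  refine sum_congr rfl fun a _ => ?_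
  simp only [sum_ite_eq, sum_ite_eq', mem_univ, ite_mul, zero_mul, ↓reduceIte]
  rcases eq_or_ne (q a) 0 with h | h
  · simp [h]
  · rw [div_mul_cancel_left₀ h, log_inv, mul_neg]

theorem MI2_mul_le_neg_sum_mul_log {W : Type*} [Fintype W] (q : X → ℝ) (κ : X → W → ℝ)
    (hq : ∀ x, 0 ≤ q x) (hκ : ∀ x w, 0 ≤ κ x w) (hκ1 : ∀ x, ∑ w, κ x w = 1) :
    MI2 (fun x w => q x * κ x w) ≤ -∑ x, q x * log (q x) := by
  classical
  have dpi := MI2_comp_le (fun x x' => if x = x' then q x else 0) κ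
    (fun x x' => by split_ifs <;> simp [hq]) hκ hκ1
  simpa only [MI2_diag, ite_mul, zero_mul, sum_ite_eq', mem_univ, ↓reduceIte] using dpi

theorem MI2_eq_of_injective {B : Type*} [Fintype B] {r : A → B → ℝ} {s : A → C → ℝ} {g : B → C}
    (hg : Function.Injective g) (hs : ∀ a b, s a (g b) = r a b)
    (hs0 : ∀ a c, c ∉ Set.range g → s a c = 0) :
    MI2 s = MI2 r := by
  have row : ∀ a, ∑ c, s a c = ∑ b, r a b := fun a =>
    (Fintype.sum_of_injective g hg _ _ (hs0 a) fun b => (hs a b).symm).symm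
  unfold MI2
  refine sum_congr rfl fun a _ => ?_
  refine (Fintype.sum_of_injective g hg _ _ (fun c hc => by rw [hs0 a c hc, zero_mul])
    fun b => ?_).symm
  simp only [row, hs]

theorem MI2_swap (r : A → C → ℝ) : MI2 (fun c a => r a c) = MI2 r := by
  unfold MI2
  rw [sum_comm]
  exact sum_congr rfl fun a _ => sum_congr rfl fun c _ => by rw [mul_comm (∑ a', r a' c)]

theorem MI2_mul_eq_zero (f : A → ℝ) (g : C → ℝ) (hf : ∑ a, f a = 1) (hg : ∑ c, g c = 1) :
    MI2 (fun a c => f a * g c) = 0 := by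
  unfold MI2
  refine sum_eq_zero fun a _ => sum_eq_zero fun c _ => ?_
  dsimp only
  rw [← mul_sum, hg, mul_one, ← sum_mul, hf, one_mul]
  rcases eq_or_ne (f a * g c) 0 with h | h
  · rw [h, zero_mul]
  · rw [div_self h, log_one, mul_zero]

end MutualInformation

section Kernel

variable {X Y U B Z : Type*}

theorem margXUBZ_piDist [Fintype Y] (p : X → Y → ℝ) (κ : X → U → B → Z → ℝ) :
    margXUBZ (piDist p κ) = fun x w => (∑ y, p x y) * κ x w.1 w.2.1 w.2.2 := by
  funext x w
  simp only [margXUBZ, piDist, sum_mul]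

theorem margYZ_piDist [Fintype X] [Fintype U] [Fintype B] (p : X → Y → ℝ)
    (κ : X → U → B → Z → ℝ) :
    margYZ (piDist p κ) = fun y z => ∑ x, p x y * ∑ u, ∑ β, κ x u β z := by
  funext y z
  simp only [margYZ, piDist, mul_sum]

variable [Fintype X] [Fintype Y] [Fintype U] [Fintype B] [Fintype Z]

theorem MI2_margXUBZ_piDist_le {p : X → Y → ℝ} {κ : X → U → B → Z → ℝ}
    (hp : ∀ x y, 0 ≤ p x y) (hκ : ∀ x u β z, 0 ≤ κ x u β z)
    (hκ1 : ∀ x, ∑ u, ∑ β, ∑ z, κ x u β z = 1) :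
    MI2 (margXUBZ (piDist p κ)) ≤ -∑ x, (∑ y, p x y) * log (∑ y, p x y) := by
  rw [margXUBZ_piDist]
  exact MI2_mul_le_neg_sum_mul_log _ (fun x (w : U × B × Z) => κ x w.1 w.2.1 w.2.2)
    (fun x => sum_nonneg fun y _ => hp x y) (fun x w => hκ x w.1 w.2.1 w.2.2)
    (fun x => by simpa only [Fintype.sum_prod_type] using hκ1 x)

theorem MI2_margYZ_piDist_le {p : X → Y → ℝ} {κ : X → U → B → Z → ℝ}
    (hp : ∀ x y, 0 ≤ p x y) (hκ : ∀ x u β z, 0 ≤ κ x u β z)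
    (hκ1 : ∀ x, ∑ u, ∑ β, ∑ z, κ x u β z = 1) :
    MI2 (margYZ (piDist p κ)) ≤ MI2 p := by
  rw [margYZ_piDist]
  refine MI2_comp_le p _ hp (fun x z => sum_nonneg fun u _ => sum_nonneg fun β _ => hκ x u β z)
    fun x => ?_
  rw [sum_comm, ← hκ1 x]
  exact sum_congr rfl fun u _ => sum_comm

end Kernel

section DomainIndexKernel

variable {X Y U B Z : Type*} [DecidableEq U] [DecidableEq B] [DecidableEq Z]

def domainIndexKernel (u₀ : U) (β₀ : B) (ι : X → Z) : X → U → B → Z → ℝ :=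
  fun x u β z => if u = u₀ ∧ β = β₀ ∧ z = ι x then 1 else 0

variable (u₀ : U) (β₀ : B) (ι : X → Z)

theorem domainIndexKernel_nonneg (x : X) (u : U) (β : B) (z : Z) :
    0 ≤ domainIndexKernel u₀ β₀ ι x u β z := by
  unfold domainIndexKernel; split_ifs <;> norm_num

variable [Fintype U] [Fintype B] [Fintype Z]

theorem sum_domainIndexKernel (x : X) :
    ∑ u, ∑ β, ∑ z, domainIndexKernel u₀ β₀ ι x u β z = 1 := by
  simp [domainIndexKernel, ite_and]

variable [Fintype X] [Fintype Y]

theorem MI2_margBZ_domainIndexKernel {p : X → Y → ℝ} (hp1 : ∑ x, ∑ y, p x y = 1) :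
    MI2 (margBZ (piDist p (domainIndexKernel u₀ β₀ ι))) = 0 := by
  have hmarg : margBZ (piDist p (domainIndexKernel u₀ β₀ ι)) = fun β z =>
      (if β = β₀ then 1 else 0) * ∑ x, if z = ι x then ∑ y, p x y else 0 := by
    funext β z
    simp only [margBZ, piDist, domainIndexKernel, ite_and, mul_sum]
    split_ifs <;> simp
  rw [hmarg]
  refine MI2_mul_eq_zero _ _ (by simp) ?_
  rw [sum_comm, ← hp1]
  simp

theorem MI2_margXUBZ_domainIndexKernel (hι : Function.Injective ι) (p : X → Y → ℝ) :
    MI2 (margXUBZ (piDist p (domainIndexKernel u₀ β₀ ι)))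
      = -∑ x, (∑ y, p x y) * log (∑ y, p x y) := by
  classical
  rw [margXUBZ_piDist, ← MI2_diag, MI2_eq_of_injective (g := fun x => (u₀, β₀, ι x))]
  · intro x x' h; exact hι (congrArg (fun w => w.2.2) h)
  · intro x x'
    simp [domainIndexKernel, hι.eq_iff, eq_comm]
  · rintro x ⟨u, β, z⟩ h
    rw [domainIndexKernel, if_neg, mul_zero]
    rintro ⟨rfl, rfl, rfl⟩
    exact h ⟨x, rfl⟩

theorem MI2_margYZ_domainIndexKernel (hι : Function.Injective ι) (p : X → Y → ℝ) :
    MI2 (margYZ (piDist p (domainIndexKernel u₀ β₀ ι))) = MI2 p := by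
  classical
  rw [margYZ_piDist, ← MI2_swap p, MI2_eq_of_injective hι]
  · intro y x
    simp [domainIndexKernel, ite_and, hι.eq_iff]
  · intro y z h
    refine sum_eq_zero fun x _ => ?_
    have hz : z ≠ ι x := fun e => h ⟨x, e.symm⟩
    simp [domainIndexKernel, hz]

end DomainIndexKernel

theorem domain_index_maximizes_orthogonal_information_general {X Y U B Z : Type*}
    [Fintype X] [Fintype Y] [Fintype U] [Fintype B] [Fintype Z]
    [Nonempty U] [Nonempty B]
    (ι : X → Z) (hι : Function.Injective ι)
    (p : X → Y → ℝ) (hp0 : ∀ x y, 0 ≤ p x y) (hp1 : ∑ x, ∑ y, p x y = 1) :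
    IsGreatest
      {v : ℝ | ∃ κ : X → U → B → Z → ℝ, (∀ x u β z, 0 ≤ κ x u β z) ∧
        (∀ x, ∑ u, ∑ β, ∑ z, κ x u β z = 1) ∧
        MI2 (margBZ (piDist p κ)) = 0 ∧
        v = MI2 (margXUBZ (piDist p κ)) + MI2 (margYZ (piDist p κ))}
      ((-∑ x, (∑ y, p x y) * Real.log (∑ y, p x y)) + MI2 p)
    ∧ ∀ κ : X → U → B → Z → ℝ, (∀ x u β z, 0 ≤ κ x u β z) →
        (∀ x, ∑ u, ∑ β, ∑ z, κ x u β z = 1) →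
        MI2 (margBZ (piDist p κ)) = 0 →
        MI2 (margXUBZ (piDist p κ)) + MI2 (margYZ (piDist p κ))
          = (-∑ x, (∑ y, p x y) * Real.log (∑ y, p x y)) + MI2 p →
        MI2 (margXUBZ (piDist p κ)) = -∑ x, (∑ y, p x y) * Real.log (∑ y, p x y)
          ∧ MI2 (margYZ (piDist p κ)) = MI2 p := by
  classical
  obtain ⟨u₀⟩ := ‹Nonempty U›
  obtain ⟨β₀⟩ := ‹Nonempty B›
  refine ⟨⟨⟨domainIndexKernel u₀ β₀ ι, domainIndexKernel_nonneg u₀ β₀ ι,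
    sum_domainIndexKernel u₀ β₀ ι, MI2_margBZ_domainIndexKernel u₀ β₀ ι hp1, ?_⟩, ?_⟩, ?_⟩
  · rw [MI2_margXUBZ_domainIndexKernel u₀ β₀ ι hι, MI2_margYZ_domainIndexKernel u₀ β₀ ι hι]
  · rintro v ⟨κ, hκ, hκ1, -, rfl⟩
    exact add_le_add (MI2_margXUBZ_piDist_le hp0 hκ hκ1) (MI2_margYZ_piDist_le hp0 hκ hκ1)
  · intro κ hκ hκ1 _ hmax
    have hXW := MI2_margXUBZ_piDist_le hp0 hκ hκ1
    have hYZ := MI2_margYZ_piDist_le hp0 hκ hκ1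
    constructor <;> linarith

/-- **Domain indices maximize data and label orthogonal information
(Appendix Lemma).**  Over kernels `κ` from `X` to `U × B × Z` satisfying the
independence constraint `I_{π_κ}(B;Z) = 0`, the supremum of
`I_{π_κ}(X;(U,B,Z)) + I_{π_κ}(Y;Z)` equals `H(p_X) + I_p(X;Y)` and is attained;
moreover any constrained maximizer `κ` satisfies both
`I_{π_κ}(X;(U,B,Z)) = H(p_X)` and `I_{π_κ}(Y;Z) = I_p(X;Y)`. -/
theorem domain_index_maximizes_orthogonal_information {X Y U B Z : Type*}
    [Fintype X] [Fintype Y] [Fintype U] [Fintype B] [Fintype Z]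
    [Nonempty X] [Nonempty Y] [Nonempty U] [Nonempty B] [Nonempty Z]
    (ι : X → Z) (hι : Function.Injective ι)
    (p : X → Y → ℝ) (hp0 : ∀ x y, 0 ≤ p x y) (hp1 : ∑ x, ∑ y, p x y = 1) :
    IsGreatest
      {v : ℝ | ∃ κ : X → U → B → Z → ℝ, (∀ x u β z, 0 ≤ κ x u β z) ∧
        (∀ x, ∑ u, ∑ β, ∑ z, κ x u β z = 1) ∧
        MI2 (margBZ (piDist p κ)) = 0 ∧
        v = MI2 (margXUBZ (piDist p κ)) + MI2 (margYZ (piDist p κ))}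
      ((-∑ x, (∑ y, p x y) * Real.log (∑ y, p x y)) + MI2 p)
    ∧ ∀ κ : X → U → B → Z → ℝ, (∀ x u β z, 0 ≤ κ x u β z) →
        (∀ x, ∑ u, ∑ β, ∑ z, κ x u β z = 1) →
        MI2 (margBZ (piDist p κ)) = 0 →
        MI2 (margXUBZ (piDist p κ)) + MI2 (margYZ (piDist p κ))
          = (-∑ x, (∑ y, p x y) * Real.log (∑ y, p x y)) + MI2 p →
        MI2 (margXUBZ (piDist p κ)) = -∑ x, (∑ y, p x y) * Real.log (∑ y, p x y)
          ∧ MI2 (margYZ (piDist p κ)) = MI2 p :=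
  domain_index_maximizes_orthogonal_information_general ι hι p hp0 hp1
end
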